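/- arXiv:2603.10736 — 2 statements merged into one kernel-verified Lean document; each statement's English description precedes it below -/
import Mathlib

section
/- A pure simplicial complex is vertex decomposable if and only if it is vertex dismissible. -/
/-- A simplicial complex: a collection of finite sets closed under taking subsets. -/
def IsComplex {α : Type*} (Δ : Set (Finset α)) : Prop :=
  ∀ F ∈ Δ, ∀ G : Finset α, G ⊆ F → G ∈ Δ

/-- A facet: a maximal face of `Δ`. -/
def IsFacet {α : Type*} (Δ : Set (Finset α)) (F : Finset α) : Prop :=
  F ∈ Δ ∧ ∀ G ∈ Δ, F ⊆ G → G = F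

/-- The initial dimension `mdim Δ`: the minimum dimension (= card − 1) of a facet of `Δ`. -/
noncomputable def mdim {α : Type*} (Δ : Set (Finset α)) : ℤ :=
  ((sInf {n : ℕ | ∃ F, IsFacet Δ F ∧ F.card = n} : ℕ) : ℤ) - 1

/-- The dimension `dimc Δ`: the maximum dimension (= card − 1) of a face of `Δ`. -/
noncomputable def dimc {α : Type*} (Δ : Set (Finset α)) : ℤ :=
  ((sSup {n : ℕ | ∃ F ∈ Δ, F.card = n} : ℕ) : ℤ) - 1

/-- A complex is pure if its initial dimension equals its dimension. -/
def IsPure {α : Type*} (Δ : Set (Finset α)) : Prop := mdim Δ = dimc Δ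

/-- Deletion of a vertex: `del_Δ(x) = {F ∈ Δ : x ∉ F}`. -/
def del {α : Type*} (Δ : Set (Finset α)) (x : α) : Set (Finset α) :=
  {F ∈ Δ | x ∉ F}

/-- Link of a vertex: `link_Δ(x) = {F \ {x} : x ∈ F ∈ Δ}`. -/
def link {α : Type*} [DecidableEq α] (Δ : Set (Finset α)) (x : α) : Set (Finset α) :=
  {G | ∃ F ∈ Δ, x ∈ F ∧ G = F \ {x}}

/-- A shedding vertex: every facet containing `x` is covered by a facet avoiding `x`. -/
def IsShedding {α : Type*} [DecidableEq α] (Δ : Set (Finset α)) (x : α) : Prop :=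
  ∀ F, IsFacet Δ F → x ∈ F → ∃ F', IsFacet Δ F' ∧ x ∉ F' ∧ F \ {x} ⊆ F'

/-- A dismissing vertex: `mdim del_Δ(x) ≥ mdim Δ`. -/
def IsDismissing {α : Type*} (Δ : Set (Finset α)) (x : α) : Prop :=
  mdim Δ ≤ mdim (del Δ x)

/-- A simplex: the collection of all subsets of a finite set (possibly empty). -/
def IsSimplexSet {α : Type*} (Δ : Set (Finset α)) : Prop :=
  ∃ F : Finset α, Δ = {G : Finset α | G ⊆ F}

/-- The pure `k`-skeleton: all faces contained in some `k`-dimensional face of `Δ`. -/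
def pureSkeleton {α : Type*} (Δ : Set (Finset α)) (k : ℤ) : Set (Finset α) :=
  {F | ∃ G ∈ Δ, F ⊆ G ∧ (G.card : ℤ) = k + 1}

/-- Vertex decomposable complexes. -/
inductive VertexDecomposable {α : Type*} [DecidableEq α] : Set (Finset α) → Prop
  | simplex {Δ : Set (Finset α)} : IsSimplexSet Δ → VertexDecomposable Δ
  | shed {Δ : Set (Finset α)} (x : α) : IsShedding Δ x →
      VertexDecomposable (del Δ x) → VertexDecomposable (link Δ x) →
      VertexDecomposable Δ

/-- Vertex dismissible complexes. -/
inductive VertexDismissible {α : Type*} [DecidableEq α] : Set (Finset α) → Prop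
  | simplex {Δ : Set (Finset α)} : IsSimplexSet Δ → VertexDismissible Δ
  | dismiss {Δ : Set (Finset α)} (x : α) : IsDismissing Δ x →
      VertexDismissible (del Δ x) → VertexDismissible (link Δ x) →
      VertexDismissible Δ

/-- `⟨F⟩`: the simplex on the finite set `F`. -/
def faceSimplex {α : Type*} (F : Finset α) : Set (Finset α) := {G : Finset α | G ⊆ F}

/-- A shelling order: an ordering `F_0, …, F_{q-1}` of the facets of `Δ` such that for `j ≥ 1`
the complex `⟨F_j⟩ ∩ ⋃_{i<j} ⟨F_i⟩` is pure of dimension `dim F_j − 1`. -/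
def IsShellingOrder {α : Type*} (Δ : Set (Finset α)) {q : ℕ} (F : Fin q → Finset α) : Prop :=
  Function.Injective F ∧ (∀ G, IsFacet Δ G ↔ ∃ i, F i = G) ∧
  ∀ j : Fin q, 0 < (j : ℕ) → ∀ G,
    IsFacet (faceSimplex (F j) ∩ ⋃ (i : Fin q) (_ : i < j), faceSimplex (F i)) G →
    (G.card : ℤ) = (F j).card - 1

/-- A complex is shellable if its facets admit a shelling order. -/
def Shellable {α : Type*} (Δ : Set (Finset α)) : Prop :=
  ∃ (q : ℕ) (F : Fin q → Finset α), IsShellingOrder Δ F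

/-- A scaling order: an ordering `F_0, …, F_{q-1}` of the facets of `Δ` such that for `j ≥ 1`
the complex `Δ_j = ⟨F_j⟩ ∩ ⋃_{i<j} ⟨F_i⟩` satisfies `mdim Δ_j ≥ mdim Δ − 1`. -/
def IsScalingOrder {α : Type*} (Δ : Set (Finset α)) {q : ℕ} (F : Fin q → Finset α) : Prop :=
  Function.Injective F ∧ (∀ G, IsFacet Δ G ↔ ∃ i, F i = G) ∧
  ∀ j : Fin q, 0 < (j : ℕ) →
    mdim Δ - 1 ≤ mdim (faceSimplex (F j) ∩ ⋃ (i : Fin q) (_ : i < j), faceSimplex (F i))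

/-- A complex is scalable if its facets admit a scaling order. -/
def Scalable {α : Type*} (Δ : Set (Finset α)) : Prop :=
  ∃ (q : ℕ) (F : Fin q → Finset α), IsScalingOrder Δ F

section Helpers

set_option linter.unusedSectionVars false

variable {α : Type*} [DecidableEq α]

lemma vd_nonempty {Δ : Set (Finset α)} (h : VertexDecomposable Δ) : Δ.Nonempty := by
  induction h with
  | simplex h => obtain ⟨F, rfl⟩ := h; exact ⟨∅, by simp [Set.mem_setOf_eq]⟩
  | shed x _ _ _ ihdel _ => obtain ⟨F, hF⟩ := ihdel; exact ⟨F, hF.1⟩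

lemma vdis_nonempty {Δ : Set (Finset α)} (h : VertexDismissible Δ) : Δ.Nonempty := by
  induction h with
  | simplex h => obtain ⟨F, rfl⟩ := h; exact ⟨∅, by simp [Set.mem_setOf_eq]⟩
  | dismiss x _ _ _ ihdel _ => obtain ⟨F, hF⟩ := ihdel; exact ⟨F, hF.1⟩

lemma del_isComplex {Δ : Set (Finset α)} (hΔ : IsComplex Δ) (x : α) :
    IsComplex (del Δ x) :=
  fun F hF G hG => ⟨hΔ F hF.1 G hG, fun hx => hF.2 (hG hx)⟩

lemma link_subset {Δ : Set (Finset α)} (hΔ : IsComplex Δ) (x : α) :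
    link Δ x ⊆ Δ := by
  rintro G ⟨F, hF, hxF, rfl⟩
  exact hΔ F hF _ (Finset.sdiff_subset)

lemma link_isComplex {Δ : Set (Finset α)} (hΔ : IsComplex Δ) (x : α) :
    IsComplex (link Δ x) := by
  rintro G ⟨F, hF, hxF, rfl⟩ G' hG'
  refine ⟨insert x G', hΔ F hF _ ?_, Finset.mem_insert_self _ _, ?_⟩
  · intro y hy
    rcases Finset.mem_insert.1 hy with rfl | hy
    · exact hxF
    · exact Finset.sdiff_subset (hG' hy)
  · have hx : x ∉ G' := fun hx => (Finset.mem_sdiff.1 (hG' hx)).2 (Finset.mem_singleton_self x)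
    ext y
    constructor
    · intro hy
      refine Finset.mem_sdiff.2 ⟨Finset.mem_insert_of_mem hy, ?_⟩
      simp only [Finset.mem_singleton]
      rintro rfl; exact hx hy
    · intro hy
      have h1 := Finset.mem_sdiff.1 hy
      rcases Finset.mem_insert.1 h1.1 with rfl | h
      · exact absurd (Finset.mem_singleton_self y) h1.2
      · exact h

lemma exists_facet {Δ : Set (Finset α)} (hfin : Δ.Finite) {F : Finset α} (hF : F ∈ Δ) :
    ∃ G, IsFacet Δ G ∧ F ⊆ G := by
  have hs : {G ∈ Δ | F ⊆ G}.Finite := hfin.subset (Set.sep_subset _ _)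
  obtain ⟨G, hG, hmax⟩ := Set.Finite.exists_maximalFor Finset.card _ hs ⟨F, hF, subset_rfl⟩
  refine ⟨G, ⟨hG.1, ?_⟩, hG.2⟩
  intro H hH hGH
  have hHs : H ∈ {G ∈ Δ | F ⊆ G} := ⟨hH, hG.2.trans hGH⟩
  have hc := hmax hHs (Finset.card_le_card hGH)
  exact (Finset.eq_of_subset_of_card_le hGH hc.ge).symm

lemma empty_mem {Δ : Set (Finset α)} (hΔ : IsComplex Δ) (hne : Δ.Nonempty) : (∅ : Finset α) ∈ Δ := by
  obtain ⟨F, hF⟩ := hne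
  exact hΔ F hF ∅ (Finset.empty_subset F)

/-- For a pure nonempty finite complex, all facets have the same cardinality `c`,
and all faces have cardinality at most `c`. -/
lemma pure_card {Δ : Set (Finset α)} (hΔ : IsComplex Δ) (hfin : Δ.Finite)
    (hpure : IsPure Δ) (hne : Δ.Nonempty) :
    ∃ c : ℕ, mdim Δ = (c : ℤ) - 1 ∧ (∀ F, IsFacet Δ F → F.card = c) ∧ ∀ F ∈ Δ, F.card ≤ c := by
  set S := {n : ℕ | ∃ F, IsFacet Δ F ∧ F.card = n} with hS
  set T := {n : ℕ | ∃ F ∈ Δ, F.card = n} with hT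
  have hTfin : T.Finite := by
    have : T = Finset.card '' Δ := by
      ext n; simp only [hT, Set.mem_image, Set.mem_setOf_eq]
    rw [this]; exact hfin.image _
  obtain ⟨F₀, hF₀⟩ := hne
  obtain ⟨G₀, hG₀, _⟩ := exists_facet hfin hF₀
  have hSne : S.Nonempty := ⟨G₀.card, G₀, hG₀, rfl⟩
  have heq : sInf S = sSup T := by
    have := hpure
    simp only [IsPure, mdim, dimc, ← hS, ← hT] at this
    omega
  refine ⟨sInf S, rfl, ?_, ?_⟩
  · intro F hF
    have h1 : sInf S ≤ F.card := Nat.sInf_le ⟨F, hF, rfl⟩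
    have h2 : F.card ≤ sSup T := le_csSup hTfin.bddAbove ⟨F, hF.1, rfl⟩
    omega
  · intro F hF
    have h2 : F.card ≤ sSup T := le_csSup hTfin.bddAbove ⟨F, hF, rfl⟩
    omega

lemma mdim_le_dimc {Δ : Set (Finset α)} (hfin : Δ.Finite) (hne : Δ.Nonempty) :
    mdim Δ ≤ dimc Δ := by
  obtain ⟨F₀, hF₀⟩ := hne
  obtain ⟨G₀, hG₀, _⟩ := exists_facet hfin hF₀
  have hTfin : {n : ℕ | ∃ F ∈ Δ, F.card = n}.Finite := by
    have : {n : ℕ | ∃ F ∈ Δ, F.card = n} = Finset.card '' Δ := by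
      ext n; simp only [Set.mem_image, Set.mem_setOf_eq]
    rw [this]; exact hfin.image _
  have h1 : sInf {n : ℕ | ∃ F, IsFacet Δ F ∧ F.card = n} ≤ G₀.card := Nat.sInf_le ⟨G₀, hG₀, rfl⟩
  have h2 : G₀.card ≤ sSup {n : ℕ | ∃ F ∈ Δ, F.card = n} :=
    le_csSup hTfin.bddAbove ⟨G₀, hG₀.1, rfl⟩
  simp only [mdim, dimc]
  omega

lemma shed_dismiss {Δ : Set (Finset α)} (hΔ : IsComplex Δ) (hfin : Δ.Finite)
    (hpure : IsPure Δ) (hne : Δ.Nonempty) {x : α} (hsh : IsShedding Δ x) :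
    IsDismissing Δ x := by
  obtain ⟨c, hmdim, hc, hcle⟩ := pure_card hΔ hfin hpure hne
  -- every facet of the deletion has cardinality c
  have key : ∀ G, IsFacet (del Δ x) G → G.card = c := by
    intro G hG
    by_cases hfac : IsFacet Δ G
    · exact hc G hfac
    · have hGΔ : G ∈ Δ := hG.1.1
      have hxG : x ∉ G := hG.1.2
      simp only [IsFacet, not_and, not_forall] at hfac
      obtain ⟨H, hH, hGH, hne'⟩ := hfac hGΔ
      obtain ⟨y, hyH, hyG⟩ := Finset.exists_of_ssubset (hGH.ssubset_of_ne (Ne.symm hne'))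
      have hyx : y = x := by
        by_contra hyx
        have hins : insert y G ∈ Δ := hΔ H hH _ (Finset.insert_subset hyH hGH)
        have hins' : insert y G ∈ del Δ x :=
          ⟨hins, fun hx => by rcases Finset.mem_insert.1 hx with rfl | hx <;> [exact hyx rfl; exact hxG hx]⟩
        have := hG.2 _ hins' (Finset.subset_insert _ _)
        exact hyG (this ▸ Finset.mem_insert_self y G)
      subst hyx
      have hins : insert y G ∈ Δ := hΔ H hH _ (Finset.insert_subset hyH hGH)
      obtain ⟨F, hFfac, hFsub⟩ := exists_facet hfin hins
      obtain ⟨F', hF'fac, hxF', hsub⟩ := hsh F hFfac (hFsub (Finset.mem_insert_self _ _))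
      have hGF' : G ⊆ F' := by
        intro z hz
        refine hsub (Finset.mem_sdiff.2 ⟨hFsub (Finset.mem_insert_of_mem hz), ?_⟩)
        simp only [Finset.mem_singleton]
        rintro rfl; exact hxG hz
      have : F' = G := hG.2 F' ⟨hF'fac.1, hxF'⟩ hGF'
      rw [← this]; exact hc F' hF'fac
  -- the deletion is nonempty, so it has a facet
  have hdelne : del Δ x |>.Nonempty :=
    ⟨∅, empty_mem hΔ hne, Finset.notMem_empty x⟩
  obtain ⟨F₁, hF₁⟩ := hdelne
  obtain ⟨G₁, hG₁, _⟩ := exists_facet (hfin.subset (Set.sep_subset _ _)) hF₁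
  have hSne : {n : ℕ | ∃ F, IsFacet (del Δ x) F ∧ F.card = n}.Nonempty := ⟨G₁.card, G₁, hG₁, rfl⟩
  have hge : c ≤ sInf {n : ℕ | ∃ F, IsFacet (del Δ x) F ∧ F.card = n} := by
    refine le_csInf hSne ?_
    rintro n ⟨F, hF, rfl⟩
    exact (key F hF).ge
  show mdim Δ ≤ mdim (del Δ x)
  rw [hmdim]
  simp only [mdim]
  omega

lemma dismiss_shed {Δ : Set (Finset α)} (hΔ : IsComplex Δ) (hfin : Δ.Finite)
    (hpure : IsPure Δ) (hne : Δ.Nonempty) {x : α} (hdis : IsDismissing Δ x) :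
    IsShedding Δ x := by
  obtain ⟨c, hmdim, hc, hcle⟩ := pure_card hΔ hfin hpure hne
  intro F hF hxF
  have hmem : F \ {x} ∈ del Δ x :=
    ⟨hΔ F hF.1 _ Finset.sdiff_subset, fun hx => (Finset.mem_sdiff.1 hx).2 (Finset.mem_singleton_self x)⟩
  obtain ⟨G, hGfac, hsub⟩ := exists_facet (hfin.subset (Set.sep_subset _ _)) hmem
  have h1 : sInf {n : ℕ | ∃ F, IsFacet (del Δ x) F ∧ F.card = n} ≤ G.card :=
    Nat.sInf_le ⟨G, hGfac, rfl⟩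
  have hcG : c ≤ G.card := by
    have hdis' : mdim Δ ≤ mdim (del Δ x) := hdis
    rw [hmdim] at hdis'
    simp only [mdim] at hdis'
    omega
  obtain ⟨G', hG'fac, hGG'⟩ := exists_facet hfin hGfac.1.1
  have : G = G' := Finset.eq_of_subset_of_card_le hGG' (by rw [hc G' hG'fac]; exact hcG)
  exact ⟨G, this ▸ hG'fac, hGfac.1.2, hsub⟩

lemma del_pure {Δ : Set (Finset α)} (hΔ : IsComplex Δ) (hfin : Δ.Finite)
    (hpure : IsPure Δ) (hne : Δ.Nonempty) {x : α} (hdis : IsDismissing Δ x) :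
    IsPure (del Δ x) := by
  have hdelfin : (del Δ x).Finite := hfin.subset (Set.sep_subset _ _)
  have hdelne : (del Δ x).Nonempty := ⟨∅, empty_mem hΔ hne, Finset.notMem_empty x⟩
  have h1 : mdim (del Δ x) ≤ dimc (del Δ x) := mdim_le_dimc hdelfin hdelne
  have h2 : dimc (del Δ x) ≤ dimc Δ := by
    have hTfin : {n : ℕ | ∃ F ∈ Δ, F.card = n}.Finite := by
      have : {n : ℕ | ∃ F ∈ Δ, F.card = n} = Finset.card '' Δ := by
        ext n; simp only [Set.mem_image, Set.mem_setOf_eq]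
      rw [this]; exact hfin.image _
    have hsub : {n : ℕ | ∃ F ∈ del Δ x, F.card = n} ⊆ {n : ℕ | ∃ F ∈ Δ, F.card = n} := by
      rintro n ⟨F, hF, rfl⟩; exact ⟨F, hF.1, rfl⟩
    have hne' : {n : ℕ | ∃ F ∈ del Δ x, F.card = n}.Nonempty :=
      ⟨0, ∅, ⟨empty_mem hΔ hne, Finset.notMem_empty x⟩, Finset.card_empty⟩
    have := csSup_le_csSup hTfin.bddAbove hne' hsub
    simp only [dimc]; omega
  have h3 : mdim Δ ≤ mdim (del Δ x) := hdis
  rw [IsPure] at hpure ⊢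
  omega

lemma link_pure {Δ : Set (Finset α)} (hΔ : IsComplex Δ) (hfin : Δ.Finite)
    (hpure : IsPure Δ) {x : α} (hx : ({x} : Finset α) ∈ Δ) :
    IsPure (link Δ x) := by
  have hne : Δ.Nonempty := ⟨_, hx⟩
  obtain ⟨c, hmdim, hc, hcle⟩ := pure_card hΔ hfin hpure hne
  have hlinkfin : (link Δ x).Finite := hfin.subset (link_subset hΔ x)
  have hlinkne : (link Δ x).Nonempty := ⟨∅, {x}, hx, Finset.mem_singleton_self x, by simp⟩
  -- facets of the link have card c - 1 (i.e. card + 1 = c)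
  have key : ∀ G, IsFacet (link Δ x) G → G.card + 1 = c := by
    intro G hG
    obtain ⟨F, hF, hxF, hGF⟩ := hG.1
    have hxG : x ∉ G := by subst hGF; simp
    have hins : insert x G ∈ Δ := by
      refine hΔ F hF _ ?_
      intro y hy
      rcases Finset.mem_insert.1 hy with rfl | hy
      · exact hxF
      · exact Finset.sdiff_subset (hGF ▸ hy)
    obtain ⟨H, hHfac, hHsub⟩ := exists_facet hfin hins
    have hxH : x ∈ H := hHsub (Finset.mem_insert_self _ _)
    have hHlink : H \ {x} ∈ link Δ x := ⟨H, hHfac.1, hxH, rfl⟩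
    have hGH : G ⊆ H \ {x} := by
      intro z hz
      refine Finset.mem_sdiff.2 ⟨hHsub (Finset.mem_insert_of_mem hz), ?_⟩
      simp only [Finset.mem_singleton]; rintro rfl; exact hxG hz
    have heq : H \ {x} = G := hG.2 _ hHlink hGH
    have : H = insert x G := by
      rw [← heq]
      ext y
      simp only [Finset.mem_insert, Finset.mem_sdiff, Finset.mem_singleton]
      constructor
      · intro hy; by_cases hyx : y = x
        · exact Or.inl hyx
        · exact Or.inr ⟨hy, hyx⟩
      · rintro (rfl | ⟨hy, _⟩) <;> [exact hxH; exact hy]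
    have hcard : H.card = c := hc H hHfac
    rw [this, Finset.card_insert_of_notMem hxG] at hcard
    omega
  -- all faces of the link have card + 1 ≤ c
  have key2 : ∀ G ∈ link Δ x, G.card + 1 ≤ c := by
    rintro G ⟨F, hF, hxF, rfl⟩
    have : (F \ {x}).card + 1 = F.card := by
      rw [Finset.card_sdiff_of_subset (Finset.singleton_subset_iff.2 hxF), Finset.card_singleton]
      have : 1 ≤ F.card := Finset.card_pos.2 ⟨x, hxF⟩
      omega
    have := hcle F hF
    omega
  obtain ⟨E, hE⟩ := hlinkne
  obtain ⟨G₀, hG₀fac, _⟩ := exists_facet hlinkfin hE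
  have hG₀c : G₀.card + 1 = c := key G₀ hG₀fac
  have hTfin : {n : ℕ | ∃ F ∈ link Δ x, F.card = n}.Finite := by
    have : {n : ℕ | ∃ F ∈ link Δ x, F.card = n} = Finset.card '' (link Δ x) := by
      ext n; simp only [Set.mem_image, Set.mem_setOf_eq]
    rw [this]; exact hlinkfin.image _
  have h1 : sInf {n : ℕ | ∃ F, IsFacet (link Δ x) F ∧ F.card = n} = G₀.card := by
    refine le_antisymm (Nat.sInf_le ⟨G₀, hG₀fac, rfl⟩) ?_
    refine le_csInf ⟨G₀.card, G₀, hG₀fac, rfl⟩ ?_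
    rintro n ⟨F, hF, rfl⟩
    have := key F hF
    omega
  have h2 : sSup {n : ℕ | ∃ F ∈ link Δ x, F.card = n} = G₀.card := by
    refine le_antisymm ?_ (le_csSup hTfin.bddAbove ⟨G₀, hG₀fac.1, rfl⟩)
    refine csSup_le ⟨G₀.card, G₀, hG₀fac.1, rfl⟩ ?_
    rintro n ⟨F, hF, rfl⟩
    have := key2 F hF
    omega
  show mdim (link Δ x) = dimc (link Δ x)
  simp only [mdim, dimc, h1, h2]

end Helpers
/-- A pure simplicial complex is vertex decomposable iff vertex dismissible. -/


theorem pure_vertexDecomposable_iff_vertexDismissible {α : Type*} [DecidableEq α]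
    (Δ : Set (Finset α)) (hΔ : IsComplex Δ) (hfin : Δ.Finite) (hpure : IsPure Δ) :
    VertexDecomposable Δ ↔ VertexDismissible Δ := by
  have key : ∀ n : ℕ, ∀ Δ : Set (Finset α), IsComplex Δ → Δ.Finite → IsPure Δ →
      Δ.ncard = n → (VertexDecomposable Δ ↔ VertexDismissible Δ) := by
    intro n
    induction n using Nat.strong_induction_on with
    | _ n IH =>
      intro Δ hΔ hfin hpure hcard
      constructor
      · intro hvd
        cases hvd with
        | simplex h => exact VertexDismissible.simplex h
        | shed x hsh hdel hlink =>
          obtain ⟨G, F, hF, hxF, _⟩ := vd_nonempty hlink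
          have hxΔ : ({x} : Finset α) ∈ Δ := hΔ F hF _ (Finset.singleton_subset_iff.2 hxF)
          have hne : Δ.Nonempty := ⟨_, hxΔ⟩
          have hdis : IsDismissing Δ x := shed_dismiss hΔ hfin hpure hne hsh
          have hdelfin : (del Δ x).Finite := hfin.subset (Set.sep_subset _ _)
          have hlinkfin : (link Δ x).Finite := hfin.subset (link_subset hΔ x)
          have hdelss : del Δ x ⊂ Δ :=
            ⟨Set.sep_subset _ _, fun h => (h hxΔ).2 (Finset.mem_singleton_self x)⟩
          have hlinkss : link Δ x ⊂ Δ := by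
            refine ⟨link_subset hΔ x, fun h => ?_⟩
            obtain ⟨F', hF', hxF', hEq⟩ := h hxΔ
            have : x ∈ F' \ {x} := hEq ▸ Finset.mem_singleton_self x
            simp at this
          have h1 := IH (del Δ x).ncard (hcard ▸ Set.ncard_lt_ncard hdelss hfin)
            (del Δ x) (del_isComplex hΔ x) hdelfin (del_pure hΔ hfin hpure hne hdis) rfl
          have h2 := IH (link Δ x).ncard (hcard ▸ Set.ncard_lt_ncard hlinkss hfin)
            (link Δ x) (link_isComplex hΔ x) hlinkfin (link_pure hΔ hfin hpure hxΔ) rfl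
          exact VertexDismissible.dismiss x hdis (h1.mp hdel) (h2.mp hlink)
      · intro hvd
        cases hvd with
        | simplex h => exact VertexDecomposable.simplex h
        | dismiss x hdis hdel hlink =>
          obtain ⟨G, F, hF, hxF, _⟩ := vdis_nonempty hlink
          have hxΔ : ({x} : Finset α) ∈ Δ := hΔ F hF _ (Finset.singleton_subset_iff.2 hxF)
          have hne : Δ.Nonempty := ⟨_, hxΔ⟩
          have hsh : IsShedding Δ x := dismiss_shed hΔ hfin hpure hne hdis
          have hdelfin : (del Δ x).Finite := hfin.subset (Set.sep_subset _ _)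
          have hlinkfin : (link Δ x).Finite := hfin.subset (link_subset hΔ x)
          have hdelss : del Δ x ⊂ Δ :=
            ⟨Set.sep_subset _ _, fun h => (h hxΔ).2 (Finset.mem_singleton_self x)⟩
          have hlinkss : link Δ x ⊂ Δ := by
            refine ⟨link_subset hΔ x, fun h => ?_⟩
            obtain ⟨F', hF', hxF', hEq⟩ := h hxΔ
            have : x ∈ F' \ {x} := hEq ▸ Finset.mem_singleton_self x
            simp at this
          have h1 := IH (del Δ x).ncard (hcard ▸ Set.ncard_lt_ncard hdelss hfin)
            (del Δ x) (del_isComplex hΔ x) hdelfin (del_pure hΔ hfin hpure hne hdis) rfl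
          have h2 := IH (link Δ x).ncard (hcard ▸ Set.ncard_lt_ncard hlinkss hfin)
            (link Δ x) (link_isComplex hΔ x) hlinkfin (link_pure hΔ hfin hpure hxΔ) rfl
          exact VertexDecomposable.shed x hsh (h1.mpr hdel) (h2.mpr hlink)
  exact key Δ.ncard Δ hΔ hfin hpure rfl
end

section
/- A pure simplicial complex is scalable if and only if it is shellable. -/
/-- In a finite complex, every face lies below a facet. -/
lemma exists_facet_above' {α : Type*} {Δ : Set (Finset α)} (hfin : Δ.Finite)
    {F : Finset α} (hF : F ∈ Δ) : ∃ G, IsFacet Δ G ∧ F ⊆ G := by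
  obtain ⟨G, hG, hmax⟩ := Set.Finite.exists_maximalFor Finset.card {H ∈ Δ | F ⊆ H}
    (hfin.subset (Set.sep_subset _ _)) ⟨F, hF, Finset.Subset.refl F⟩
  refine ⟨G, ⟨hG.1, fun H hH hGH => ?_⟩, hG.2⟩
  exact (Finset.eq_of_subset_of_card_le hGH
    (hmax ⟨hH, hG.2.trans hGH⟩ (Finset.card_le_card hGH))).symm

/-- Every facet of a pure finite complex has cardinality `mdim Δ + 1`. -/
lemma facet_card_eq_of_pure {α : Type*} {Δ : Set (Finset α)} (hfin : Δ.Finite)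
    (hpure : IsPure Δ) {F : Finset α} (hF : IsFacet Δ F) :
    (F.card : ℤ) = mdim Δ + 1 := by
  have hMeq : sInf {n : ℕ | ∃ F, IsFacet Δ F ∧ F.card = n}
      = sSup {n : ℕ | ∃ F ∈ Δ, F.card = n} := by
    have := hpure
    unfold IsPure mdim dimc at this
    omega
  have h1 : sInf {n : ℕ | ∃ F, IsFacet Δ F ∧ F.card = n} ≤ F.card :=
    Nat.sInf_le ⟨F, hF, rfl⟩
  have hbdd : BddAbove {n : ℕ | ∃ F ∈ Δ, F.card = n} := by
    have : {n : ℕ | ∃ F ∈ Δ, F.card = n} = Finset.card '' Δ := by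
      ext n; simp [Set.mem_image]
    rw [this]
    exact (hfin.image _).bddAbove
  have h2 : F.card ≤ sSup {n : ℕ | ∃ F ∈ Δ, F.card = n} :=
    le_csSup hbdd ⟨F, hF.1, rfl⟩
  unfold mdim
  omega

/-- A pure simplicial complex is scalable iff it is shellable. -/
theorem pure_scalable_iff_shellable {α : Type*} [DecidableEq α] (Δ : Set (Finset α))
    (hΔ : IsComplex Δ) (hfin : Δ.Finite) (hpure : IsPure Δ) :
    Scalable Δ ↔ Shellable Δ := by
  have key : ∀ (q : ℕ) (F : Fin q → Finset α), Function.Injective F →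
      (∀ G, IsFacet Δ G ↔ ∃ i, F i = G) → ∀ j : Fin q, 0 < (j : ℕ) →
      (let Δj := faceSimplex (F j) ∩ ⋃ (i : Fin q) (_ : i < j), faceSimplex (F i)
       -- basic facts about Δj
       Δj.Finite ∧ (∅ : Finset α) ∈ Δj ∧
       (∀ G, IsFacet Δj G → G ⊆ F j ∧ G ≠ F j)) := by
    intro q F hinj hfac j hj
    intro Δj
    have hFj : IsFacet Δ (F j) := (hfac (F j)).2 ⟨j, rfl⟩
    refine ⟨?_, ?_, ?_⟩
    · refine Set.Finite.subset ((F j).powerset : Finset (Finset α)).finite_toSet ?_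
      intro G hG
      simpa [faceSimplex, Finset.mem_powerset] using hG.1
    · constructor
      · exact Finset.empty_subset _
      · have h0q : 0 < q := lt_of_le_of_lt (Nat.zero_le _) j.isLt
        refine Set.mem_iUnion.2 ⟨⟨0, h0q⟩, Set.mem_iUnion.2 ⟨?_, ?_⟩⟩
        · exact hj
        · exact Finset.empty_subset _
    · intro G hG
      have hGj : G ⊆ F j := hG.1.1
      refine ⟨hGj, fun hEq => ?_⟩
      obtain ⟨i, hilt, hGi⟩ : ∃ i : Fin q, i < j ∧ G ⊆ F i := by
        have := hG.1.2
        simpa [faceSimplex, Set.mem_iUnion] using this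
      have hFiΔ : F i ∈ Δ := ((hfac (F i)).2 ⟨i, rfl⟩).1
      have : F i = F j := hFj.2 (F i) hFiΔ (hEq ▸ hGi)
      exact absurd (hinj this) (ne_of_lt hilt)
  constructor
  · -- Scalable → Shellable (uses purity)
    rintro ⟨q, F, hinj, hfac, hcond⟩
    refine ⟨q, F, hinj, hfac, ?_⟩
    intro j hj G hG
    obtain ⟨hjfin, hjne, hjsub⟩ := key q F hinj hfac j hj
    have hFj : IsFacet Δ (F j) := (hfac (F j)).2 ⟨j, rfl⟩
    have hFjcard : ((F j).card : ℤ) = mdim Δ + 1 :=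
      facet_card_eq_of_pure hfin hpure hFj
    obtain ⟨hGj, hGne⟩ := hjsub G hG
    have hlt : G.card < (F j).card :=
      Finset.card_lt_card (lt_of_le_of_ne hGj hGne)
    have hle : sInf {n : ℕ | ∃ H, IsFacet (faceSimplex (F j) ∩
        ⋃ (i : Fin q) (_ : i < j), faceSimplex (F i)) H ∧ H.card = n} ≤ G.card :=
      Nat.sInf_le ⟨G, hG, rfl⟩
    have hc := hcond j hj
    unfold mdim at hc hFjcard
    omega
  · -- Shellable → Scalable
    rintro ⟨q, F, hinj, hfac, hcond⟩
    refine ⟨q, F, hinj, hfac, ?_⟩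
    intro j hj
    obtain ⟨hjfin, hjne, hjsub⟩ := key q F hinj hfac j hj
    have hFj : IsFacet Δ (F j) := (hfac (F j)).2 ⟨j, rfl⟩
    set Δj := faceSimplex (F j) ∩ ⋃ (i : Fin q) (_ : i < j), faceSimplex (F i) with hΔj
    obtain ⟨G0, hG0, -⟩ := exists_facet_above' hjfin hjne
    have hne : {n : ℕ | ∃ H, IsFacet Δj H ∧ H.card = n}.Nonempty := ⟨G0.card, G0, hG0, rfl⟩
    obtain ⟨G, hGfac, hGcard⟩ := Nat.sInf_mem hne
    have hGval : (G.card : ℤ) = ((F j).card : ℤ) - 1 := hcond j hj G hGfac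
    have hmle : sInf {n : ℕ | ∃ H, IsFacet Δ H ∧ H.card = n} ≤ (F j).card :=
      Nat.sInf_le ⟨F j, hFj, rfl⟩
    unfold mdim
    omega
end
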